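/- Let X be a principal 𝕋-bundle, t₀ ∈ X with trivial isotropy, a ∈ S(C₀^𝕋(X)) with 0 < |a(t₀)| < 1, and λ = a(t₀)/|a(t₀)|. Then for each ε > 0 with |a(t₀)| + ε < 1 there exist aₑ ∈ S(C₀^𝕋(X)) and bₑ ∈ C₀^𝕋(X) with ‖bₑ‖ = 1, bₑ(t₀) = 1, aₑ(t₀) = a(t₀), ‖a − aₑ‖ ≤ ε, and for every r ∈ (0,1) the function r·aₑ + (1 − r|a(t₀)|)·λ·bₑ has sup norm 1 and takes value λ at t₀. -/

import Mathlib

open scoped ZeroAtInfty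

/-!
Take `aₑ = a` and `bₑ = λ⁻¹ · a · ψ(|a|)`, where `s ψ(s)` is the tent function on `[0, 1]`
rising linearly from `0` to `1` on `[0, c]` and falling back to `0` on `[c, 1]`, `c = |a(t₀)|`.
Since `bₑ` is a radial function of `a`, it is equivariant, and
`r a + (1 - r c) λ bₑ = a · (r + (1 - r c) ψ(|a|))`, whose modulus where `|a| = s` is at most
`r s + (1 - r c) (1 - s) / (1 - c) ≤ 1` on the falling side, because `(r - 1)(s - c) ≤ 0`.
At `t₀` we get `bₑ(t₀) = 1` and the combination takes the unimodular value `λ`, so both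
norms are `1`.
-/

/-- `s * tentProfile c s` is the tent `min (s / c) ((1 - s) / (1 - c))` on `[0, 1]`; the `max`
keeps `z ↦ z * tentProfile c ‖z‖` continuous at `0`. -/
noncomputable def tentProfile (c s : ℝ) : ℝ := min c⁻¹ ((1 - s) / ((1 - c) * max s c))

section TentProfile

variable {c : ℝ} (hc0 : 0 < c) (hc1 : c < 1)
include hc0 hc1

theorem continuous_tentProfile : Continuous (tentProfile c) :=
  continuous_const.min <| Continuous.div (by fun_prop) (by fun_prop) fun s =>
    mul_ne_zero (sub_ne_zero.2 hc1.ne') (hc0.trans_le (le_max_right s c)).ne'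

theorem tentProfile_self : tentProfile c c = c⁻¹ := by
  have hc1' : 1 - c ≠ 0 := sub_ne_zero.2 hc1.ne'
  have : (1 - c) / ((1 - c) * c) = c⁻¹ := by field_simp
  rw [tentProfile, max_self, this, min_self]

theorem abs_mul_add_tentProfile_le_one {r s : ℝ} (hr0 : 0 ≤ r) (hr1 : r ≤ 1)
    (hs0 : 0 ≤ s) (hs1 : s ≤ 1) : |s * (r + (1 - r * c) * tentProfile c s)| ≤ 1 := by
  have h1c : 0 < 1 - c := by linarith
  have h1rc : 0 ≤ 1 - r * c := by nlinarith
  have hψ0 : 0 ≤ tentProfile c s :=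
    le_min (inv_nonneg.2 hc0.le)
      (div_nonneg (by linarith) (mul_nonneg h1c.le (le_max_of_le_right hc0.le)))
  rw [abs_of_nonneg (mul_nonneg hs0 (add_nonneg hr0 (mul_nonneg h1rc hψ0)))]
  rcases le_total s c with hsc | hcs
  · calc s * (r + (1 - r * c) * tentProfile c s) ≤ s * (r + (1 - r * c) * c⁻¹) := by
          gcongr; exact min_le_left _ _
      _ = s / c := by field_simp; ring
      _ ≤ 1 := (div_le_one hc0).2 hsc
  · have hs : 0 < s := hc0.trans_le hcs
    calc s * (r + (1 - r * c) * tentProfile c s)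
          ≤ s * (r + (1 - r * c) * ((1 - s) / ((1 - c) * s))) := by
          gcongr; exact (min_le_right _ _).trans_eq (by rw [max_eq_left hcs])
      _ = (r * s * (1 - c) + (1 - r * c) * (1 - s)) / (1 - c) := by field_simp
      _ ≤ 1 := by
          rw [div_le_one h1c]
          nlinarith [mul_nonneg (sub_nonneg.2 hr1) (sub_nonneg.2 hcs)]

end TentProfile

namespace ZeroAtInftyContinuousMap

section Norm

variable {α β : Type*} [TopologicalSpace α] [SeminormedAddCommGroup β] (f : C₀(α, β))

theorem norm_apply_le (x : α) : ‖f x‖ ≤ ‖f‖ := f.toBCF.norm_coe_le_norm x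

theorem norm_le_of_forall_le {C : ℝ} (hC : 0 ≤ C) (h : ∀ x, ‖f x‖ ≤ C) : ‖f‖ ≤ C :=
  (BoundedContinuousFunction.norm_le hC).2 h

end Norm

section CompLeft

variable {α β γ : Type*} [TopologicalSpace α] [TopologicalSpace β] [Zero β]
  [TopologicalSpace γ] [Zero γ]

def compLeft (g : β → γ) (hg : Continuous g) (hg0 : g 0 = 0) (f : C₀(α, β)) : C₀(α, γ) where
  toFun := g ∘ f
  continuous_toFun := hg.comp f.continuous
  zero_at_infty' := by simpa [hg0] using (hg.tendsto 0).comp f.zero_at_infty'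

@[simp]
theorem compLeft_apply (g : β → γ) (hg : Continuous g) (hg0 : g 0 = 0) (f : C₀(α, β)) (x : α) :
    f.compLeft g hg hg0 x = g (f x) :=
  rfl

end CompLeft

variable {X : Type*} [TopologicalSpace X] [MulAction Circle X]

theorem compLeft_circle_equivariant {g : ℂ → ℂ} (hg : Continuous g) (hg0 : g 0 = 0)
    (hgeq : ∀ (l : Circle) (z : ℂ), g (l * z) = l * g z) {a : C₀(X, ℂ)}
    (haeq : ∀ (l : Circle) (t : X), a (l • t) = l * a t) (l : Circle) (t : X) :
    a.compLeft g hg hg0 (l • t) = l * a.compLeft g hg hg0 t := by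
  simp only [compLeft_apply, haeq, hgeq]

end ZeroAtInftyContinuousMap

section TentBump

open ZeroAtInftyContinuousMap

variable {X : Type*} [TopologicalSpace X] (a : C₀(X, ℂ)) {c : ℝ} (hc0 : 0 < c) (hc1 : c < 1)
  (lam : ℂ)

noncomputable def tentBump : C₀(X, ℂ) :=
  a.compLeft (fun z => lam⁻¹ * (z * tentProfile c ‖z‖))
    (continuous_const.mul <| continuous_id.mul <| Complex.continuous_ofReal.comp <|
      (continuous_tentProfile hc0 hc1).comp continuous_norm)
    (by simp)

theorem tentBump_apply (t : X) :
    tentBump a hc0 hc1 lam t = lam⁻¹ * (a t * tentProfile c ‖a t‖) :=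
  rfl

theorem tentBump_circle_equivariant [MulAction Circle X]
    (haeq : ∀ (l : Circle) (t : X), a (l • t) = l * a t) (l : Circle) (t : X) :
    tentBump a hc0 hc1 lam (l • t) = l * tentBump a hc0 hc1 lam t :=
  compLeft_circle_equivariant _ _
    (fun l z => by simp only [norm_mul, Circle.norm_coe, one_mul]; ring) haeq l t

theorem tentBump_apply_eq_one {t : X} (hlam : ‖lam‖ = 1) (ht : a t = c * lam) :
    tentBump a hc0 hc1 lam t = 1 := by
  have hlam0 : lam ≠ 0 := norm_ne_zero_iff.1 (by simp [hlam])
  have hc : ‖a t‖ = c := by simp [ht, hlam, hc0.le]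
  have hc0' : (c : ℂ) ≠ 0 := by exact_mod_cast hc0.ne'
  rw [tentBump_apply, hc, tentProfile_self hc0 hc1, ht]
  push_cast
  field_simp

variable {a}

theorem norm_tentBump_le (ha : ‖a‖ ≤ 1) (hlam : ‖lam‖ = 1) : ‖tentBump a hc0 hc1 lam‖ ≤ 1 := by
  refine norm_le_of_forall_le _ zero_le_one fun t => ?_
  have h := abs_mul_add_tentProfile_le_one hc0 hc1 le_rfl zero_le_one (norm_nonneg (a t))
    ((a.norm_apply_le t).trans ha)
  simpa [tentBump_apply, hlam] using h

theorem norm_smul_add_smul_tentBump_le (ha : ‖a‖ ≤ 1) (hlam : lam ≠ 0) {r : ℝ} (hr0 : 0 ≤ r)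
    (hr1 : r ≤ 1) :
    ‖(r : ℂ) • a + (((1 - r * c : ℝ) : ℂ) * lam) • tentBump a hc0 hc1 lam‖ ≤ 1 := by
  refine norm_le_of_forall_le _ zero_le_one fun t => ?_
  have hpt : ((r : ℂ) • a + (((1 - r * c : ℝ) : ℂ) * lam) • tentBump a hc0 hc1 lam) t
      = a t * ((r + (1 - r * c) * tentProfile c ‖a t‖ : ℝ) : ℂ) := by
    simp only [ZeroAtInftyContinuousMap.add_apply, ZeroAtInftyContinuousMap.smul_apply,
      tentBump_apply, smul_eq_mul]
    field_simp
    push_cast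
    ring
  rw [hpt, norm_mul, Complex.norm_real, Real.norm_eq_abs, ← abs_norm, ← abs_mul, abs_norm]
  exact abs_mul_add_tentProfile_le_one hc0 hc1 hr0 hr1 (norm_nonneg _)
    ((a.norm_apply_le t).trans ha)

end TentBump

theorem stmt16_general {X : Type*} [TopologicalSpace X]
    [MulAction Circle X]
    (t₀ : X)
    (a : C₀(X, ℂ)) (haeq : ∀ (l : Circle) (t : X), a (l • t) = (l : ℂ) * a t)
    (ha1 : ‖a‖ = 1) (h0 : 0 < ‖a t₀‖) (hlt : ‖a t₀‖ < 1)
    (lam : ℂ) (hlam : lam = a t₀ / (‖a t₀‖ : ℂ)) :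
    ∀ ε : ℝ, 0 < ε → ‖a t₀‖ + ε < 1 →
      ∃ ae be : C₀(X, ℂ),
        (∀ (l : Circle) (t : X), ae (l • t) = (l : ℂ) * ae t) ∧
        (∀ (l : Circle) (t : X), be (l • t) = (l : ℂ) * be t) ∧
        ‖ae‖ = 1 ∧ ‖be‖ = 1 ∧ be t₀ = 1 ∧ ae t₀ = a t₀ ∧ ‖a - ae‖ ≤ ε ∧
        ∀ r : ℝ, 0 < r → r < 1 →
          ‖(r : ℂ) • ae + (((1 - r * ‖a t₀‖ : ℝ) : ℂ) * lam) • be‖ = 1 ∧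
          ((r : ℂ) • ae + (((1 - r * ‖a t₀‖ : ℝ) : ℂ) * lam) • be) t₀ = lam := by
  intro ε hε _
  set c := ‖a t₀‖
  have hlam1 : ‖lam‖ = 1 := by simp [hlam, c, h0.ne']
  have hat₀ : a t₀ = c * lam := by
    rw [hlam, mul_div_cancel₀ _ (Complex.ofReal_ne_zero.2 h0.ne')]
  set b := tentBump a h0 hlt lam
  have hb₀ : b t₀ = 1 := tentBump_apply_eq_one a h0 hlt lam hlam1 hat₀
  have hcomb₀ : ∀ r : ℝ, ((r : ℂ) • a + (((1 - r * c : ℝ) : ℂ) * lam) • b) t₀ = lam := by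
    intro r
    simp only [ZeroAtInftyContinuousMap.add_apply, ZeroAtInftyContinuousMap.smul_apply, hb₀, hat₀,
      smul_eq_mul]
    push_cast
    ring
  refine ⟨a, b, haeq, tentBump_circle_equivariant a h0 hlt lam haeq, ha1,
    le_antisymm (norm_tentBump_le h0 hlt lam ha1.le hlam1)
      (by simpa [hb₀] using b.norm_apply_le t₀),
    hb₀, rfl, by simpa using hε.le, fun r hr0 hr1 => ⟨?_, hcomb₀ r⟩⟩
  refine le_antisymm (norm_smul_add_smul_tentBump_le h0 hlt lam ha1.le ?_ hr0.le hr1.le) ?_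
  · exact norm_ne_zero_iff.1 (by simp [hlam1])
  · simpa only [hcomb₀ r, hlam1] using ZeroAtInftyContinuousMap.norm_apply_le
      ((r : ℂ) • a + (((1 - r * c : ℝ) : ℂ) * lam) • b) t₀

theorem stmt16 {X : Type*} [TopologicalSpace X] [LocallyCompactSpace X] [T2Space X]
    [MulAction Circle X] [ContinuousSMul Circle X]
    (hfree : ∀ (l : Circle) (t : X), l • t = t → l = 1)
    (t₀ : X)
    (a : C₀(X, ℂ)) (haeq : ∀ (l : Circle) (t : X), a (l • t) = (l : ℂ) * a t)
    (ha1 : ‖a‖ = 1) (h0 : 0 < ‖a t₀‖) (hlt : ‖a t₀‖ < 1)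
    (lam : ℂ) (hlam : lam = a t₀ / (‖a t₀‖ : ℂ)) :
    ∀ ε : ℝ, 0 < ε → ‖a t₀‖ + ε < 1 →
      ∃ ae be : C₀(X, ℂ),
        (∀ (l : Circle) (t : X), ae (l • t) = (l : ℂ) * ae t) ∧
        (∀ (l : Circle) (t : X), be (l • t) = (l : ℂ) * be t) ∧
        ‖ae‖ = 1 ∧ ‖be‖ = 1 ∧ be t₀ = 1 ∧ ae t₀ = a t₀ ∧ ‖a - ae‖ ≤ ε ∧
        ∀ r : ℝ, 0 < r → r < 1 →
          ‖(r : ℂ) • ae + (((1 - r * ‖a t₀‖ : ℝ) : ℂ) * lam) • be‖ = 1 ∧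
          ((r : ℂ) • ae + (((1 - r * ‖a t₀‖ : ℝ) : ℂ) * lam) • be) t₀ = lam :=
  stmt16_general t₀ a haeq ha1 h0 hlt lam hlam
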